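/- For any model M, point w, condition Γ, and formula φ: (M,w) ⊨_Γ φ iff (M,w) ⊨ φ^Γ, where φ^Γ is the translation replacing each subformula ◇_a ψ with ψ ∈ Γ_a by ⊤, and replacing ◇_a ψ with ψ ∉ Γ_a by ◇_a (ψ^Γ) (recursively), and leaving variables and Boolean connectives unchanged. -/
import Mathlib

/-- Modal formulas over a set `A` of modality indices. -/
inductive MF (A : Type*) : Type _ where
  | bot : MF A
  | var : ℕ → MF A
  | imp : MF A → MF A → MF A
  | dia : A → MF A → MF A

/-- `⊤` as a modal formula. -/
def MF.top {A : Type*} : MF A := .imp .bot .bot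

/-- Truth at `w` under the condition `Γ` in the model `(R, θ)`. -/
def csat {A W : Type*} (R : A → W → W → Prop) (θ : ℕ → W → Prop)
    (Γ : A → Set (MF A)) : MF A → W → Prop
  | .bot, _ => False
  | .var n, w => θ n w
  | .imp φ ψ, w => csat R θ Γ φ w → csat R θ Γ ψ w
  | .dia a φ, w => φ ∈ Γ a ∨ ∃ v, R a w v ∧ csat R θ Γ φ v

open Classical in
/-- The translation `φ ↦ φ^Γ`: replace `◇_a ψ` by `⊤` when `ψ ∈ Γ_a`, and by
`◇_a (ψ^Γ)` otherwise; variables and Boolean connectives unchanged. -/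
noncomputable def trG {A : Type*} (Γ : A → Set (MF A)) : MF A → MF A
  | .bot => .bot
  | .var n => .var n
  | .imp φ ψ => .imp (trG Γ φ) (trG Γ ψ)
  | .dia a φ => if φ ∈ Γ a then MF.top else .dia a (trG Γ φ)

/-- Truth under a condition `Γ` coincides with ordinary truth of the translated
formula `φ^Γ` (ordinary truth = truth under the all-empty condition). -/
theorem stmt_14 {A W : Type*} (R : A → W → W → Prop) (θ : ℕ → W → Prop)
    (Γ : A → Set (MF A)) (φ : MF A) (w : W) :
    csat R θ Γ φ w ↔ csat R θ (fun _ => (∅ : Set (MF A))) (trG Γ φ) w := by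
  induction φ generalizing w with
  | bot => simp [csat, trG]
  | var n => simp [csat, trG]
  | imp φ ψ ihφ ihψ => simp [csat, trG, ihφ, ihψ]
  | dia a φ ih =>
    by_cases h : φ ∈ Γ a <;>
      simp [csat, trG, h, MF.top, ih, Set.mem_empty_iff_false]
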